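/- arXiv:2206.04931 — 2 statements merged into one kernel-verified Lean document; each statement's English description precedes it below -/
import Mathlib

section
/- Suppose $\lambda : \mathbb{N}^2 \to \mathbb{C}$ is such that the multiplier operator $M(f) = (\lambda(m,n)\widehat{f}(m,n))_{m,n}$ is bounded from $H^1(\mathbb{T}\times\mathbb{T})$ into $\ell^2(\mathbb{N}^2)$. Then there exists a constant $C > 0$ such that for all $m, n \in \mathbb{N}$, $\sum_{\alpha=2^m}^{2^{m+1}-1} \sum_{\beta=2^n}^{2^{n+1}-1} |\lambda(\alpha,\beta)|^2 \le C$. -/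
/-!
Test the bound on `f(x, y) = V_{2^{m+1}}(x) V_{2^{n+1}}(y)`, where
`V_M(x) = e^{iMx} |D_M(x)|² / M` (`shiftedFejer M`) and `D_M(x) = ∑_{j<M} e^{ijx}`.
Expanding `|D_M|² = D_M · conj D_M`, the `α`-th Fourier coefficient of `V_M` is
`#{(j, j') ∈ [0, M)² : M + j - j' = α} / M`: it vanishes for `α ≤ 0` (so `f ∈ H¹`), and is at
least `1/2` for `M/2 ≤ α < M`, so the coefficients of `f` are at least `1/4` on the dyadic block.
Since `|V_M|` is the Fejér kernel, `‖f‖_{L¹} ≤ 1`, hence the block sum of `|λ|²` is at most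
`16 ‖M f‖² ≤ 16 K²`.
-/

open MeasureTheory Real Complex

/-- The torus `𝕋 × 𝕋 = [0,2π) × [0,2π)`. -/
def torus2 : Set (ℝ × ℝ) := Set.Ico 0 (2 * π) ×ˢ Set.Ico 0 (2 * π)

/-- The `(m,n)`-th Fourier coefficient of `f : 𝕋 × 𝕋 → ℂ`. -/
noncomputable def fc (f : ℝ × ℝ → ℂ) (m n : ℤ) : ℂ :=
  (1 / (2 * π) ^ 2 : ℝ) •
    ∫ p in torus2, f p * Complex.exp (-Complex.I * ((m : ℂ) * p.1 + (n : ℂ) * p.2))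

/-- `f ∈ H¹(𝕋 × 𝕋)`: `f` is integrable and its Fourier coefficients vanish for
negative frequencies. -/
def MemH1 (f : ℝ × ℝ → ℂ) : Prop :=
  IntegrableOn f torus2 ∧ ∀ m n : ℤ, (m < 0 ∨ n < 0) → fc f m n = 0

/-- `‖f‖_{H¹} = ‖f‖_{L¹}` with the normalized measure. -/
noncomputable def L1norm (f : ℝ × ℝ → ℂ) : ℝ :=
  (1 / (2 * π) ^ 2) * ∫ p in torus2, ‖f p‖

noncomputable def fc1 (g : ℝ → ℂ) (m : ℤ) : ℂ :=
  (1 / (2 * π) : ℝ) • ∫ x in Set.Ico 0 (2 * π), g x * exp (-I * (m * x))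

noncomputable def L1norm1 (g : ℝ → ℂ) : ℝ :=
  (1 / (2 * π)) * ∫ x in Set.Ico 0 (2 * π), ‖g x‖

theorem fc_mul_prod (g h : ℝ → ℂ) (m n : ℤ) :
    fc (fun p => g p.1 * h p.2) m n = fc1 g m * fc1 h n := by
  have hsplit : ∀ p : ℝ × ℝ, g p.1 * h p.2 * exp (-I * ((m : ℂ) * p.1 + (n : ℂ) * p.2)) =
      (g p.1 * exp (-I * (m * p.1))) * (h p.2 * exp (-I * (n * p.2))) := fun p => by
    rw [show -I * ((m : ℂ) * p.1 + (n : ℂ) * p.2) = -I * (m * p.1) + -I * (n * p.2) by ring,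
      Complex.exp_add]
    ring
  simp only [fc, fc1, hsplit, torus2, Measure.volume_eq_prod, Complex.real_smul]
  rw [setIntegral_prod_mul (fun x => g x * exp (-I * (m * x))) (fun y => h y * exp (-I * (n * y)))]
  push_cast
  ring

theorem L1norm_mul_prod (g h : ℝ → ℂ) :
    L1norm (fun p => g p.1 * h p.2) = L1norm1 g * L1norm1 h := by
  simp only [L1norm, L1norm1, norm_mul, torus2, Measure.volume_eq_prod]
  rw [setIntegral_prod_mul (fun x => ‖g x‖) (fun y => ‖h y‖)]
  ring

theorem L1norm1_nonneg (g : ℝ → ℂ) : 0 ≤ L1norm1 g :=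
  mul_nonneg (by positivity) (integral_nonneg fun _ => norm_nonneg _)

theorem integrableOn_torus2_of_continuous {f : ℝ × ℝ → ℂ} (hf : Continuous f) :
    IntegrableOn f torus2 := by
  refine (hf.integrableOn_Icc (a := ((0 : ℝ), (0 : ℝ))) (b := (2 * π, 2 * π))).mono_set ?_
  rw [torus2, ← Set.Icc_prod_Icc]
  exact Set.prod_mono Set.Ico_subset_Icc_self Set.Ico_subset_Icc_self

theorem integral_exp_I_int_mul (k : ℤ) :
    ∫ x in Set.Ico 0 (2 * π), exp (I * k * x) = if k = 0 then ((2 * π : ℝ) : ℂ) else 0 := by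
  rw [integral_Ico_eq_integral_Ioo, ← integral_Ioc_eq_integral_Ioo,
    ← intervalIntegral.integral_of_le (by positivity)]
  split_ifs with hk
  · simp [hk]
  · have hc : I * k ≠ 0 := by simp [hk]
    rw [integral_exp_mul_complex hc, show I * k * ((2 * π : ℝ) : ℂ) = k * (2 * π * I) by
      push_cast; ring, Complex.exp_int_mul_two_pi_mul_I]
    simp

def pairCount (M : ℕ) (α : ℤ) : ℕ :=
  ((Finset.range M ×ˢ Finset.range M).filter fun q => (M : ℤ) + q.1 - q.2 = α).card

theorem pairCount_eq_zero_of_nonpos {M : ℕ} {α : ℤ} (hα : α ≤ 0) : pairCount M α = 0 := by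
  rw [pairCount, Finset.card_eq_zero, Finset.filter_eq_empty_iff]
  intro q hq
  simp only [Finset.mem_product, Finset.mem_range] at hq
  omega

theorem pairCount_self (M : ℕ) : pairCount M M = M := by
  have hdiag : ((Finset.range M ×ˢ Finset.range M).filter fun q => (M : ℤ) + q.1 - q.2 = M) =
      (Finset.range M).diag := by
    rw [Finset.diag_eq_filter]
    refine Finset.filter_congr fun q _ => ?_
    omega
  rw [pairCount, hdiag, Finset.diag_card, Finset.card_range]

theorem le_pairCount {A : ℕ} {α : ℤ} (h₁ : A ≤ α) (h₂ : α < 2 * A) :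
    A ≤ pairCount (2 * A) α := by
  obtain ⟨t, rfl⟩ : ∃ t : ℕ, α = 2 * A - t := ⟨(2 * A - α).toNat, by omega⟩
  calc A = (Finset.range A).card := (Finset.card_range A).symm
    _ ≤ pairCount (2 * A) (2 * A - t) := by
      refine Finset.card_le_card_of_injOn (fun j => (j, j + t)) (fun j hj => ?_)
        (fun j _ k _ hjk => congrArg Prod.fst hjk)
      simp only [Finset.coe_range, Set.mem_Iio, Finset.coe_filter, Finset.mem_product,
        Finset.mem_range, Set.mem_ofPred_eq] at hj ⊢
      omega

noncomputable def dirichletSum (M : ℕ) (x : ℝ) : ℂ :=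
  ∑ j ∈ Finset.range M, exp (I * j * x)

noncomputable def shiftedFejer (M : ℕ) (x : ℝ) : ℂ :=
  exp (I * M * x) * ((normSq (dirichletSum M x) / M : ℝ) : ℂ)

theorem continuous_shiftedFejer (M : ℕ) : Continuous (shiftedFejer M) := by
  have : Continuous (dirichletSum M) := continuous_finsetSum _ fun j _ => by fun_prop
  unfold shiftedFejer
  fun_prop

theorem shiftedFejer_mul_exp_eq_sum (M : ℕ) (α : ℤ) (x : ℝ) :
    shiftedFejer M x * exp (-I * (α * x)) =
      (M : ℂ)⁻¹ * ∑ q ∈ Finset.range M ×ˢ Finset.range M,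
        exp (I * (((M : ℤ) + q.1 - q.2 - α : ℤ) : ℂ) * x) := by
  rw [shiftedFejer, Complex.ofReal_div, ← Complex.mul_conj, dirichletSum, map_sum,
    Finset.sum_mul_sum, ← Finset.sum_product', div_eq_inv_mul, Finset.mul_sum, Finset.mul_sum,
    Finset.sum_mul, Finset.mul_sum]
  refine Finset.sum_congr rfl fun q _ => ?_
  have hconj : starRingEnd ℂ (exp (I * q.2 * x)) = exp (-(I * q.2 * x)) := by
    rw [← Complex.exp_conj]
    simp
  rw [hconj, Complex.ofReal_natCast]
  calc _ = (M : ℂ)⁻¹ * (exp (I * M * x) * exp (I * q.1 * x) * exp (-(I * q.2 * x)) *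
        exp (-I * (α * x))) := by ring
    _ = _ := by
      simp only [← Complex.exp_add]
      push_cast
      ring_nf

theorem fc1_shiftedFejer (M : ℕ) (α : ℤ) : fc1 (shiftedFejer M) α = pairCount M α / M := by
  have hcount : ((Finset.range M ×ˢ Finset.range M).filter
      fun q : ℕ × ℕ => (M : ℤ) + q.1 - q.2 - α = 0) =
      (Finset.range M ×ˢ Finset.range M).filter fun q => (M : ℤ) + q.1 - q.2 = α :=
    Finset.filter_congr fun _ _ => sub_eq_zero
  have hexp_integrable (k : ℤ) : IntegrableOn (fun x : ℝ => exp (I * k * x)) (Set.Ico 0 (2 * π)) :=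
    (by fun_prop : Continuous fun x : ℝ => exp (I * k * x)).integrableOn_Icc.mono_set
      Set.Ico_subset_Icc_self
  simp_rw [fc1, shiftedFejer_mul_exp_eq_sum]
  rw [integral_const_mul, integral_finsetSum _ fun q _ => hexp_integrable _]
  simp_rw [integral_exp_I_int_mul]
  rw [← Finset.sum_filter, Finset.sum_const, hcount, ← pairCount, Complex.real_smul, nsmul_eq_mul]
  have hπ : (π : ℂ) ≠ 0 := Complex.ofReal_ne_zero.2 Real.pi_ne_zero
  push_cast
  field_simp

theorem ofReal_norm_shiftedFejer (M : ℕ) (x : ℝ) :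
    (‖shiftedFejer M x‖ : ℂ) = shiftedFejer M x * exp (-I * (M * x)) := by
  have hr : 0 ≤ normSq (dirichletSum M x) / M := div_nonneg (normSq_nonneg _) M.cast_nonneg
  have hphase : shiftedFejer M x * exp (-I * (M * x)) = (normSq (dirichletSum M x) / M : ℝ) := by
    rw [shiftedFejer, mul_right_comm, ← Complex.exp_add,
      show I * M * x + -I * (M * x) = 0 by ring, Complex.exp_zero, one_mul]
  rw [hphase, shiftedFejer, norm_mul, Complex.norm_exp, Complex.norm_real,
    Real.norm_of_nonneg hr]
  simp

theorem L1norm1_shiftedFejer_le_one (M : ℕ) : L1norm1 (shiftedFejer M) ≤ 1 := by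
  have h : (L1norm1 (shiftedFejer M) : ℂ) = fc1 (shiftedFejer M) M := by
    rw [L1norm1, fc1, Complex.real_smul, Complex.ofReal_mul, ← integral_complex_ofReal]
    simp_rw [ofReal_norm_shiftedFejer, Int.cast_natCast]
  rw [fc1_shiftedFejer, pairCount_self, ← Complex.ofReal_natCast, ← Complex.ofReal_div,
    Complex.ofReal_inj] at h
  rw [h]
  exact div_self_le_one _

theorem half_le_norm_fc1_shiftedFejer {A α : ℕ} (hα : α ∈ Finset.Ico A (2 * A)) :
    1 / 2 ≤ ‖fc1 (shiftedFejer (2 * A)) α‖ := by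
  rw [Finset.mem_Ico] at hα
  have hcount : (A : ℝ) ≤ pairCount (2 * A) α := by
    exact_mod_cast le_pairCount (by exact_mod_cast hα.1) (by exact_mod_cast hα.2)
  rw [fc1_shiftedFejer, norm_div, Complex.norm_natCast, Complex.norm_natCast,
    le_div_iff₀ (Nat.cast_pos.2 (by omega))]
  push_cast
  linarith

theorem memH1_shiftedFejer_prod (M N : ℕ) :
    MemH1 fun p => shiftedFejer M p.1 * shiftedFejer N p.2 := by
  have hM := continuous_shiftedFejer M
  have hN := continuous_shiftedFejer N
  refine ⟨integrableOn_torus2_of_continuous (by fun_prop), fun m n hmn => ?_⟩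
  rw [fc_mul_prod, fc1_shiftedFejer, fc1_shiftedFejer]
  rcases hmn with h | h <;> simp [pairCount_eq_zero_of_nonpos h.le]

theorem sum_norm_sq_le_tsum_norm_mul_sq {ι 𝕜 : Type*} [NormedDivisionRing 𝕜] {s : Finset ι}
    {a c : ι → 𝕜} {δ : ℝ} (hδ : 0 ≤ δ) (hc : ∀ i ∈ s, δ ≤ ‖c i‖)
    (hs : Summable fun i => ‖a i * c i‖ ^ 2) :
    δ ^ 2 * ∑ i ∈ s, ‖a i‖ ^ 2 ≤ ∑' i, ‖a i * c i‖ ^ 2 :=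
  calc δ ^ 2 * ∑ i ∈ s, ‖a i‖ ^ 2 = ∑ i ∈ s, (‖a i‖ * δ) ^ 2 := by
        simp_rw [Finset.mul_sum, mul_pow, mul_comm]
    _ ≤ ∑ i ∈ s, ‖a i * c i‖ ^ 2 := Finset.sum_le_sum fun i hi => by
        rw [norm_mul]
        gcongr
        exact hc i hi
    _ ≤ ∑' i, ‖a i * c i‖ ^ 2 := hs.sum_le_tsum s fun i _ => by positivity

/-- Necessity: if `λ` is a bounded Fourier multiplier from `H¹(𝕋×𝕋)` into `ℓ²`, then
the sums of `|λ|²` over dyadic blocks are uniformly bounded. -/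
theorem multiplier_necessary_block_condition (lam : ℕ × ℕ → ℂ) (K : ℝ)
    (hbound : ∀ f : ℝ × ℝ → ℂ, MemH1 f →
      Summable (fun p : ℕ × ℕ => ‖lam p * fc f (p.1 : ℤ) (p.2 : ℤ)‖ ^ 2) ∧
      (∑' p : ℕ × ℕ, ‖lam p * fc f (p.1 : ℤ) (p.2 : ℤ)‖ ^ 2) ≤ K ^ 2 * (L1norm f) ^ 2) :
    ∃ C > 0, ∀ m n : ℕ,
      ∑ α ∈ Finset.Ico (2 ^ m) (2 ^ (m + 1)), ∑ β ∈ Finset.Ico (2 ^ n) (2 ^ (n + 1)),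
        ‖lam (α, β)‖ ^ 2 ≤ C := by
  refine ⟨16 * K ^ 2 + 1, by positivity, fun m n => ?_⟩
  set f : ℝ × ℝ → ℂ := fun p => shiftedFejer (2 * 2 ^ m) p.1 * shiftedFejer (2 * 2 ^ n) p.2
  obtain ⟨hsum, hle⟩ := hbound f (memH1_shiftedFejer_prod _ _)
  have hcoeff : ∀ p ∈ (Finset.Ico (2 ^ m) (2 ^ (m + 1)) ×ˢ Finset.Ico (2 ^ n) (2 ^ (n + 1)) :
      Finset (ℕ × ℕ)), 1 / 4 ≤ ‖fc f p.1 p.2‖ := by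
    rintro ⟨α, β⟩ hp
    simp only [Finset.mem_product, pow_succ'] at hp
    rw [fc_mul_prod, norm_mul]
    have hα := half_le_norm_fc1_shiftedFejer hp.1
    have hβ := half_le_norm_fc1_shiftedFejer hp.2
    nlinarith
  have hL1 : 0 ≤ L1norm f ∧ L1norm f ≤ 1 := by
    rw [L1norm_mul_prod]
    exact ⟨mul_nonneg (L1norm1_nonneg _) (L1norm1_nonneg _), mul_le_one₀
      (L1norm1_shiftedFejer_le_one _) (L1norm1_nonneg _) (L1norm1_shiftedFejer_le_one _)⟩
  calc ∑ α ∈ Finset.Ico (2 ^ m) (2 ^ (m + 1)), ∑ β ∈ Finset.Ico (2 ^ n) (2 ^ (n + 1)),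
        ‖lam (α, β)‖ ^ 2
      = ∑ p ∈ Finset.Ico (2 ^ m) (2 ^ (m + 1)) ×ˢ Finset.Ico (2 ^ n) (2 ^ (n + 1)),
          ‖lam p‖ ^ 2 := (Finset.sum_product' _ _ _).symm
    _ ≤ 16 * ∑' p : ℕ × ℕ, ‖lam p * fc f (p.1 : ℤ) (p.2 : ℤ)‖ ^ 2 := by
        have := sum_norm_sq_le_tsum_norm_mul_sq (by norm_num) hcoeff hsum
        linarith
    _ ≤ 16 * (K ^ 2 * 1) := by
        gcongr
        exact hle.trans (by gcongr; nlinarith)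
    _ ≤ 16 * K ^ 2 + 1 := by linarith
end

section
/- Assume there exists $C_1 > 0$ such that for every two-dimensional lacunary 0-1 sequence $\mu$ (having at most one nonzero entry in each dyadic block $[2^k,2^{k+1}) \times [2^l,2^{l+1})$) and every $f \in H^1(\mathbb{T}\times\mathbb{T})$, $\left(\sum_{m,n} |\mu(m,n)\widehat{f}(m,n)|^2\right)^{1/2} \le C_1 \|f\|_{L^1}$. Let $\lambda : \mathbb{N}^2 \to \mathbb{C}$ satisfy $\sum_{\alpha=2^m}^{2^{m+1}-1} \sum_{\beta=2^n}^{2^{n+1}-1} |\lambda(\alpha,\beta)|^2 \le C_2$ for all $m, n \in \mathbb{N}$. Then for every $f \in H^1(\mathbb{T}\times\mathbb{T})$, $\left(\sum_{k,l \ge 1} |\lambda(k,l)\widehat{f}(k,l)|^2\right)^{1/2} \le \sqrt{C_2}\, C_1 \|f\|_{L^1}$; i.e., $\lambda$ defines a bounded multiplier from $H^1(\mathbb{T}\times\mathbb{T})$ to $\ell^2$. -/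
open MeasureTheory Real Complex ENNReal

/-- A `0-1` sequence is two-dimensional lacunary if each dyadic block
`[2^k, 2^{k+1}) × [2^l, 2^{l+1})` contains at most one nonzero entry. -/
def IsLacunary (μ : ℕ × ℕ → ℝ) : Prop :=
  (∀ p, μ p = 0 ∨ μ p = 1) ∧
  ∀ k l : ℕ, ∀ p q : ℕ × ℕ,
    (2 ^ k ≤ p.1 ∧ p.1 < 2 ^ (k + 1) ∧ 2 ^ l ≤ p.2 ∧ p.2 < 2 ^ (l + 1)) →
    (2 ^ k ≤ q.1 ∧ q.1 < 2 ^ (k + 1) ∧ 2 ^ l ≤ q.2 ∧ q.2 < 2 ^ (l + 1)) →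
    μ p = 1 → μ q = 1 → p = q

/-!
Choose in each dyadic block `b` a point `rep b` at which `|f̂|` is largest; the indicator
of these points is a lacunary `0-1` sequence `μ`. Inside a block,
`∑ |λ f̂|² ≤ (∑ |λ|²) · |f̂ (rep b)|² ≤ C₂ |f̂ (rep b)|²`, so summing over the blocks
bounds the left-hand side by `C₂ ∑ |μ f̂|² ≤ C₂ C₁² ‖f‖₁²`.
-/

open Finset

theorem ENNReal.tsum_mul_le_of_fiberwise_le {ι κ : Type*} (blk : ι → κ) (rep : κ → ι)
    {w c : ι → ℝ≥0∞} {M : ℝ≥0∞} (hw : ∀ b, ∑' p : blk ⁻¹' {b}, w p ≤ M)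
    (hc : ∀ p, w p ≠ 0 → c p ≤ c (rep (blk p))) :
    ∑' p, w p * c p ≤ M * ∑' b, c (rep b) :=
  calc ∑' p, w p * c p
      ≤ ∑' p, w p * c (rep (blk p)) := ENNReal.tsum_le_tsum fun p => by
        by_cases hp : w p = 0
        · simp [hp]
        · exact mul_le_mul_right (hc p hp) _
    _ = ∑' b, ∑' p : blk ⁻¹' {b}, w p * c (rep (blk p)) :=
        (ENNReal.tsum_fiberwise _ blk).symm
    _ = ∑' b, (∑' p : blk ⁻¹' {b}, w p) * c (rep b) := tsum_congr fun b => by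
        rw [← ENNReal.tsum_mul_right]
        exact tsum_congr fun p => by rw [show blk p = b from p.2]
    _ ≤ ∑' b, M * c (rep b) := ENNReal.tsum_le_tsum fun b => mul_le_mul_left (hw b) _
    _ = M * ∑' b, c (rep b) := ENNReal.tsum_mul_left

theorem ENNReal.rpow_half_le_ofReal_sqrt_mul {T S : ℝ≥0∞} {C X : ℝ} (hC : 0 ≤ C)
    (hT : T ≤ ENNReal.ofReal C * S) (hS : S ^ (1 / 2 : ℝ) ≤ ENNReal.ofReal X) :
    T ^ (1 / 2 : ℝ) ≤ ENNReal.ofReal (√C * X) :=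
  calc T ^ (1 / 2 : ℝ)
      ≤ (ENNReal.ofReal C * S) ^ (1 / 2 : ℝ) := ENNReal.rpow_le_rpow hT (by norm_num)
    _ = ENNReal.ofReal √C * S ^ (1 / 2 : ℝ) := by
        rw [ENNReal.mul_rpow_of_nonneg _ _ (by norm_num),
          ENNReal.ofReal_rpow_of_nonneg hC (by norm_num), Real.sqrt_eq_rpow]
    _ ≤ ENNReal.ofReal √C * ENNReal.ofReal X := by gcongr
    _ = ENNReal.ofReal (√C * X) := (ENNReal.ofReal_mul (Real.sqrt_nonneg _)).symm

theorem tsum_enorm_sq_comp_le_tsum_indicator_range {ι κ : Type*} {rep : κ → ι}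
    (hrep : Function.Injective rep) (x : ι → ℂ) :
    ∑' b, ‖x (rep b)‖ₑ ^ 2 ≤
      ∑' p, ‖(((Set.range rep).indicator 1 p : ℝ) : ℂ) * x p‖ₑ ^ 2 :=
  calc ∑' b, ‖x (rep b)‖ₑ ^ 2
      = ∑' b, ‖(((Set.range rep).indicator 1 (rep b) : ℝ) : ℂ) * x (rep b)‖ₑ ^ 2 :=
        tsum_congr fun b => by simp
    _ ≤ _ := ENNReal.tsum_comp_le_tsum_of_injective hrep _

def dyadicBlock (b : ℕ × ℕ) : Finset (ℕ × ℕ) :=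
  Ico (2 ^ b.1) (2 ^ (b.1 + 1)) ×ˢ Ico (2 ^ b.2) (2 ^ (b.2 + 1))

-- `Nat.log 2 0 = 0`, so a point with a zero coordinate lies in no dyadic block although
-- `dyadicIndex` assigns it one.
def dyadicIndex (p : ℕ × ℕ) : ℕ × ℕ := (Nat.log 2 p.1, Nat.log 2 p.2)

theorem mem_dyadicBlock {b p : ℕ × ℕ} :
    p ∈ dyadicBlock b ↔
      2 ^ b.1 ≤ p.1 ∧ p.1 < 2 ^ (b.1 + 1) ∧ 2 ^ b.2 ≤ p.2 ∧ p.2 < 2 ^ (b.2 + 1) := by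
  simp [dyadicBlock, and_assoc]

theorem mem_dyadicBlock_iff_dyadicIndex_eq {b p : ℕ × ℕ} :
    p ∈ dyadicBlock b ↔ (1 ≤ p.1 ∧ 1 ≤ p.2) ∧ dyadicIndex p = b := by
  rw [mem_dyadicBlock]
  constructor
  · rintro ⟨h₁, h₂, h₃, h₄⟩
    exact ⟨⟨Nat.one_le_two_pow.trans h₁, Nat.one_le_two_pow.trans h₃⟩,
      Prod.ext (Nat.log_eq_of_pow_le_of_lt_pow h₁ h₂)
        (Nat.log_eq_of_pow_le_of_lt_pow h₃ h₄)⟩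
  · rintro ⟨⟨h₁, h₂⟩, rfl⟩
    exact ⟨Nat.pow_log_le_self 2 (by omega), Nat.lt_pow_succ_log_self one_lt_two _,
      Nat.pow_log_le_self 2 (by omega), Nat.lt_pow_succ_log_self one_lt_two _⟩

theorem dyadicBlock_nonempty (b : ℕ × ℕ) : (dyadicBlock b).Nonempty :=
  ⟨(2 ^ b.1, 2 ^ b.2), mem_dyadicBlock.2
    ⟨le_rfl, Nat.pow_lt_pow_succ one_lt_two, le_rfl, Nat.pow_lt_pow_succ one_lt_two⟩⟩

theorem dyadicIndex_of_mem_dyadicBlock {b p : ℕ × ℕ} (h : p ∈ dyadicBlock b) :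
    dyadicIndex p = b :=
  (mem_dyadicBlock_iff_dyadicIndex_eq.1 h).2

theorem injective_of_mem_dyadicBlock {rep : ℕ × ℕ → ℕ × ℕ}
    (hrep : ∀ b, rep b ∈ dyadicBlock b) : Function.Injective rep :=
  Function.LeftInverse.injective (g := dyadicIndex) fun b =>
    dyadicIndex_of_mem_dyadicBlock (hrep b)

theorem isLacunary_indicator_range {rep : ℕ × ℕ → ℕ × ℕ}
    (hrep : ∀ b, rep b ∈ dyadicBlock b) :
    IsLacunary ((Set.range rep).indicator 1) := by
  refine ⟨fun p => ?_, fun k l p q hp hq hp₁ hq₁ => ?_⟩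
  · by_cases h : p ∈ Set.range rep <;> simp [h]
  obtain ⟨b, rfl⟩ : p ∈ Set.range rep := by by_contra h; simp [h] at hp₁
  obtain ⟨b', rfl⟩ : q ∈ Set.range rep := by by_contra h; simp [h] at hq₁
  have hb : b = (k, l) := (dyadicIndex_of_mem_dyadicBlock (hrep b)).symm.trans
    (dyadicIndex_of_mem_dyadicBlock (mem_dyadicBlock.2 hp))
  have hb' : b' = (k, l) := (dyadicIndex_of_mem_dyadicBlock (hrep b')).symm.trans
    (dyadicIndex_of_mem_dyadicBlock (mem_dyadicBlock.2 hq))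
  rw [hb, hb']

theorem sum_dyadicBlock_enorm_sq_le {E : Type*} [SeminormedAddGroup E] {lam : ℕ × ℕ → E}
    {C : ℝ} {b : ℕ × ℕ}
    (h : ∑ α ∈ Ico (2 ^ b.1) (2 ^ (b.1 + 1)), ∑ β ∈ Ico (2 ^ b.2) (2 ^ (b.2 + 1)),
      ‖lam (α, β)‖ ^ 2 ≤ C) :
    ∑ p ∈ dyadicBlock b, ‖lam p‖ₑ ^ 2 ≤ ENNReal.ofReal C := by
  have hsq : ∀ p, ‖lam p‖ₑ ^ 2 = ENNReal.ofReal (‖lam p‖ ^ 2) := fun p => by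
    rw [ENNReal.ofReal_pow (norm_nonneg _), ofReal_norm]
  simp_rw [hsq, ← ENNReal.ofReal_sum_of_nonneg fun p _ => sq_nonneg ‖lam p‖]
  rw [dyadicBlock, sum_product]
  exact ENNReal.ofReal_le_ofReal h

theorem tsum_dyadicIndex_fiber_ite (x : ℕ × ℕ → ℝ≥0∞) (b : ℕ × ℕ) :
    ∑' p : dyadicIndex ⁻¹' {b}, (if 1 ≤ p.1.1 ∧ 1 ≤ p.1.2 then x p else 0) =
      ∑ p ∈ dyadicBlock b, x p := by
  rw [_root_.tsum_subtype _ fun p : ℕ × ℕ => if 1 ≤ p.1 ∧ 1 ≤ p.2 then x p else 0,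
    sum_eq_tsum_indicator]
  congr 1
  funext p
  simp only [Set.indicator, Set.mem_preimage, Set.mem_singleton_iff, Finset.mem_coe,
    mem_dyadicBlock_iff_dyadicIndex_eq]
  split_ifs <;> tauto

theorem multiplier_sufficient_block_condition_general (C₁ C₂ : ℝ)
    (hlac : ∀ μ : ℕ × ℕ → ℝ, IsLacunary μ → ∀ f : ℝ × ℝ → ℂ, MemH1 f →
      (∑' p : ℕ × ℕ, ((‖(μ p : ℂ) * fc f (p.1 : ℤ) (p.2 : ℤ)‖₊ : ℝ≥0∞)) ^ 2) ^ ((1 : ℝ) / 2)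
        ≤ ENNReal.ofReal (C₁ * L1norm f))
    (lam : ℕ × ℕ → ℂ)
    (hblock : ∀ m n : ℕ,
      ∑ α ∈ Finset.Ico (2 ^ m) (2 ^ (m + 1)), ∑ β ∈ Finset.Ico (2 ^ n) (2 ^ (n + 1)),
        ‖lam (α, β)‖ ^ 2 ≤ C₂) :
    ∀ f : ℝ × ℝ → ℂ, MemH1 f →
      (∑' p : ℕ × ℕ,
          (if 1 ≤ p.1 ∧ 1 ≤ p.2 then
            ((‖lam p * fc f (p.1 : ℤ) (p.2 : ℤ)‖₊ : ℝ≥0∞)) ^ 2 else 0)) ^ ((1 : ℝ) / 2)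
        ≤ ENNReal.ofReal (Real.sqrt C₂ * C₁ * L1norm f) := by
  intro f hf
  simp only [← enorm_eq_nnnorm] at hlac ⊢
  set c : ℕ × ℕ → ℝ≥0∞ := fun p => ‖fc f p.1 p.2‖ₑ ^ 2 with hc
  choose rep hrep hmax using fun b => (dyadicBlock b).exists_max_image c (dyadicBlock_nonempty b)
  have hC₂ : 0 ≤ C₂ :=
    (sum_nonneg fun _ _ => sum_nonneg fun _ _ => sq_nonneg _).trans (hblock 0 0)
  rw [mul_assoc]
  refine ENNReal.rpow_half_le_ofReal_sqrt_mul hC₂ ?_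
    (hlac _ (isLacunary_indicator_range hrep) f hf)
  calc _ = ∑' p : ℕ × ℕ, (if 1 ≤ p.1 ∧ 1 ≤ p.2 then ‖lam p‖ₑ ^ 2 else 0) * c p :=
        tsum_congr fun p => by split_ifs <;> simp [hc, mul_pow]
    _ ≤ ENNReal.ofReal C₂ * ∑' b, c (rep b) :=
        ENNReal.tsum_mul_le_of_fiberwise_le dyadicIndex rep
          (fun b => (tsum_dyadicIndex_fiber_ite _ b).trans_le
            (sum_dyadicBlock_enorm_sq_le (hblock b.1 b.2)))
          (fun p hp => hmax _ p
            (mem_dyadicBlock_iff_dyadicIndex_eq.2 ⟨(ite_ne_right_iff.1 hp).1, rfl⟩))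
    _ ≤ _ := mul_le_mul_right (tsum_enorm_sq_comp_le_tsum_indicator_range
          (injective_of_mem_dyadicBlock hrep) fun p => fc f p.1 p.2) _

/-- Sufficiency: the uniform dyadic block condition on `λ` implies that `λ` is a
bounded Fourier multiplier from `H¹(𝕋×𝕋)` to `ℓ²`, granted the lacunary estimate. -/
theorem multiplier_sufficient_block_condition (C₁ C₂ : ℝ) (hC₁ : 0 < C₁)
    (hlac : ∀ μ : ℕ × ℕ → ℝ, IsLacunary μ → ∀ f : ℝ × ℝ → ℂ, MemH1 f →
      (∑' p : ℕ × ℕ, ((‖(μ p : ℂ) * fc f (p.1 : ℤ) (p.2 : ℤ)‖₊ : ℝ≥0∞)) ^ 2) ^ ((1 : ℝ) / 2)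
        ≤ ENNReal.ofReal (C₁ * L1norm f))
    (lam : ℕ × ℕ → ℂ)
    (hblock : ∀ m n : ℕ,
      ∑ α ∈ Finset.Ico (2 ^ m) (2 ^ (m + 1)), ∑ β ∈ Finset.Ico (2 ^ n) (2 ^ (n + 1)),
        ‖lam (α, β)‖ ^ 2 ≤ C₂) :
    ∀ f : ℝ × ℝ → ℂ, MemH1 f →
      (∑' p : ℕ × ℕ,
          (if 1 ≤ p.1 ∧ 1 ≤ p.2 then
            ((‖lam p * fc f (p.1 : ℤ) (p.2 : ℤ)‖₊ : ℝ≥0∞)) ^ 2 else 0)) ^ ((1 : ℝ) / 2)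
        ≤ ENNReal.ofReal (Real.sqrt C₂ * C₁ * L1norm f) :=
  multiplier_sufficient_block_condition_general C₁ C₂ hlac lam hblock
end
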